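/- arXiv:2309.02825 — 6 statements merged into one kernel-verified Lean document; each statement's English description precedes it below -/
import Mathlib

section
/- Let ε > 0 and set s1 = 2/(6ε+1), s2 = 24ε/(6ε+1)², and w1 = 1/6. Then the three fourth-order conditions for the one-dimensional MRT lattice Boltzmann model hold: (i) ε = 2 w1 (1/s1 − 1/2); (ii) R1 = 0, where R1 = 6[s2(s1−1) + s1² + s2 − 2 s1] − s2 s1² + 6 w1 [2 s1 (2 − s1) + s2 (4 + s1² − 6 s1)]; (iii) Con1 = 0, where Con1 = 3 s1 [s2 + s1 − 2] − s1² s2 + 6 w1 (2 − s1) [s1 + s2 (1 − s1)]. -/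
/-- The parameter choice `s1 = 2/(6ε+1)`, `s2 = 24ε/(6ε+1)²`, `w1 = 1/6` satisfies the
three fourth-order conditions of the 1D MRT lattice Boltzmann model:
the diffusion-coefficient condition `ε = 2 w1 (1/s1 − 1/2)`, the modified-equation
condition `R1 = 0`, and the gradient condition `Con1 = 0`. -/
theorem oneD_fourth_order_conditions
    (ε : ℝ) (hε : 0 < ε)
    (s1 s2 w1 : ℝ)
    (hs1 : s1 = 2 / (6 * ε + 1))
    (hs2 : s2 = 24 * ε / (6 * ε + 1) ^ 2)
    (hw1 : w1 = 1 / 6) :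
    ε = 2 * w1 * (1 / s1 - 1 / 2) ∧
    6 * (s2 * (s1 - 1) + s1 ^ 2 + s2 - 2 * s1) - s2 * s1 ^ 2
      + 6 * w1 * (2 * s1 * (2 - s1) + s2 * (4 + s1 ^ 2 - 6 * s1)) = 0 ∧
    3 * s1 * (s2 + s1 - 2) - s1 ^ 2 * s2
      + 6 * w1 * (2 - s1) * (s1 + s2 * (1 - s1)) = 0 := by
  have h : (6 * ε + 1) ≠ 0 := by nlinarith
  subst hs1 hs2 hw1
  refine ⟨?_, ?_, ?_⟩ <;> field_simp <;> ring
end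

section
/- Let d ≥ 2 be an integer, let ε > 0, and set s1 = 2/(6ε+1), s21 = 24ε/(6ε+1)², w1 = 1/6 − (d−1)ε/3, and w* = ε/6 (the weight w_{1+2d}). Then R_{d1} = 0, where, writing W = w1 + 2(d−1)w*, R_{d1} = 6[s21(s1−1) + s1² + s21 − 2 s1] − s21 s1² + 6 W [2 s1 (2 − s1) + s21 (4 + s1² − 6 s1)]. -/
/-- For `d ≥ 2`, the parameter choice `s1 = 2/(6ε+1)`, `s21 = 24ε/(6ε+1)²`,
`w1 = 1/6 − (d−1)ε/3`, `w* = ε/6` satisfies the fourth-order modified-equation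
condition `R_{d1} = 0`, where `W = w1 + 2(d−1)w*`. -/
theorem Rd1_vanishes
    (d : ℕ) (hd : 2 ≤ d) (ε : ℝ) (hε : 0 < ε)
    (s1 s21 w1 wstar W : ℝ)
    (hs1 : s1 = 2 / (6 * ε + 1))
    (hs21 : s21 = 24 * ε / (6 * ε + 1) ^ 2)
    (hw1 : w1 = 1 / 6 - ((d : ℝ) - 1) * ε / 3)
    (hwstar : wstar = ε / 6)
    (hW : W = w1 + 2 * ((d : ℝ) - 1) * wstar) :
    6 * (s21 * (s1 - 1) + s1 ^ 2 + s21 - 2 * s1) - s21 * s1 ^ 2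
      + 6 * W * (2 * s1 * (2 - s1) + s21 * (4 + s1 ^ 2 - 6 * s1)) = 0 := by
  have h : (6 * ε + 1) ≠ 0 := by positivity
  subst hs1 hs21 hw1 hwstar hW
  field_simp
  ring
end

section
/- Let d ≥ 2 be an integer, let ε > 0, and set s1 = 2/(6ε+1), s21 = 24ε/(6ε+1)², s22 = 4/(6ε+3), w1 = 1/6 − (d−1)ε/3, and w* = ε/6 (the weight w_{1+2d}). Then R_{d2} = 0, where, writing W = w1 + 2(d−1)w*, R_{d2} = s1² w* [2(s1−2)(2 s21 + s22) + s21 s22 (8 − 3 s1)] − 8 s1 s21 s22 W² + s22 (w1² + 4(d−1) w* [w1 + (d−1) w*]) (8[s1 + s21 − s1² + (s1−1) s1 s21] + (2 − s21) s1³). -/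
/-- For `d ≥ 2`, the parameter choice `s1 = 2/(6ε+1)`, `s21 = 24ε/(6ε+1)²`,
`s22 = 4/(6ε+3)`, `w1 = 1/6 − (d−1)ε/3`, `w* = ε/6` satisfies the fourth-order
modified-equation condition `R_{d2} = 0`, where `W = w1 + 2(d−1)w*`. -/
theorem Rd2_vanishes
    (d : ℕ) (hd : 2 ≤ d) (ε : ℝ) (hε : 0 < ε)
    (s1 s21 s22 w1 wstar W : ℝ)
    (hs1 : s1 = 2 / (6 * ε + 1))
    (hs21 : s21 = 24 * ε / (6 * ε + 1) ^ 2)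
    (hs22 : s22 = 4 / (6 * ε + 3))
    (hw1 : w1 = 1 / 6 - ((d : ℝ) - 1) * ε / 3)
    (hwstar : wstar = ε / 6)
    (hW : W = w1 + 2 * ((d : ℝ) - 1) * wstar) :
    s1 ^ 2 * wstar * (2 * (s1 - 2) * (2 * s21 + s22) + s21 * s22 * (8 - 3 * s1))
      - 8 * s1 * s21 * s22 * W ^ 2
      + s22 * (w1 ^ 2 + 4 * ((d : ℝ) - 1) * wstar * (w1 + ((d : ℝ) - 1) * wstar))
        * (8 * (s1 + s21 - s1 ^ 2 + (s1 - 1) * s1 * s21) + (2 - s21) * s1 ^ 3) = 0 := by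
  have h1 : (6 * ε + 1) ≠ 0 := by positivity
  have h3 : (6 * ε + 3) ≠ 0 := by positivity
  subst hs1 hs21 hs22 hw1 hwstar hW
  field_simp
  ring
end

section
/- Let d ≥ 2 be an integer, let ε > 0, and set s1 = 2/(6ε+1), s21 = 24ε/(6ε+1)², w1 = 1/6 − (d−1)ε/3, and w* = ε/6 (the weight w_{1+2d}). Then Con_{d1} = 0, where, writing W = w1 + 2(d−1)w*, Con_{d1} = 3 s1 [s21 + s1 − 2] − s1² s21 + 6 W (2 − s1) [s1 + s21 (1 − s1)]. -/
/-- For `d ≥ 2`, the parameter choice `s1 = 2/(6ε+1)`, `s21 = 24ε/(6ε+1)²`,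
`w1 = 1/6 − (d−1)ε/3`, `w* = ε/6` satisfies the gradient-accuracy condition
`Con_{d1} = 0`, where `W = w1 + 2(d−1)w*`. -/
theorem Cond1_vanishes
    (d : ℕ) (hd : 2 ≤ d) (ε : ℝ) (hε : 0 < ε)
    (s1 s21 w1 wstar W : ℝ)
    (hs1 : s1 = 2 / (6 * ε + 1))
    (hs21 : s21 = 24 * ε / (6 * ε + 1) ^ 2)
    (hw1 : w1 = 1 / 6 - ((d : ℝ) - 1) * ε / 3)
    (hwstar : wstar = ε / 6)
    (hW : W = w1 + 2 * ((d : ℝ) - 1) * wstar) :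
    3 * s1 * (s21 + s1 - 2) - s1 ^ 2 * s21
      + 6 * W * (2 - s1) * (s1 + s21 * (1 - s1)) = 0 := by
  have h : (6 * ε + 1) ≠ 0 := by positivity
  subst hs1 hs21 hw1 hwstar hW
  field_simp
  ring
end

section
/- Let d ≥ 2 be an integer, let ε > 0, and set s1 = 2/(6ε+1), s21 = 24ε/(6ε+1)², s22 = 4/(6ε+3), w1 = 1/6 − (d−1)ε/3, and w* = ε/6 (the weight w_{1+2d}). Then Con_{d2} = 0, where Con_{d2} = −(s22 w1² + 4 s22 [w1 + (d−1) w*] w* (d−1)) (s1 − 2)(s1 + s21 − s1 s21) − s1² w* (2 s21 + s22 − 2 s21 s22). -/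
/-- For `d ≥ 2`, the parameter choice `s1 = 2/(6ε+1)`, `s21 = 24ε/(6ε+1)²`,
`s22 = 4/(6ε+3)`, `w1 = 1/6 − (d−1)ε/3`, `w* = ε/6` satisfies the gradient-accuracy
condition `Con_{d2} = 0`. -/
theorem Cond2_vanishes
    (d : ℕ) (hd : 2 ≤ d) (ε : ℝ) (hε : 0 < ε)
    (s1 s21 s22 w1 wstar : ℝ)
    (hs1 : s1 = 2 / (6 * ε + 1))
    (hs21 : s21 = 24 * ε / (6 * ε + 1) ^ 2)
    (hs22 : s22 = 4 / (6 * ε + 3))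
    (hw1 : w1 = 1 / 6 - ((d : ℝ) - 1) * ε / 3)
    (hwstar : wstar = ε / 6) :
    -(s22 * w1 ^ 2 + 4 * s22 * (w1 + ((d : ℝ) - 1) * wstar) * wstar * ((d : ℝ) - 1))
        * (s1 - 2) * (s1 + s21 - s1 * s21)
      - s1 ^ 2 * wstar * (2 * s21 + s22 - 2 * s21 * s22) = 0 := by
  have h1 : (6 * ε + 1) ≠ 0 := by positivity
  have h2 : (6 * ε + 3) ≠ 0 := by positivity
  subst hs1 hs21 hs22 hw1 hwstar
  field_simp
  ring
end

section
/- Let ν > 0. For (x,y) ∈ ℝ² and t > 0 define E = exp(−5νπ²t), D = 2 + E sin(2πx) sin(πy), u_x(x,y,t) = −2ν · 2π E cos(2πx) sin(πy) / D, and u_y(x,y,t) = −2ν · π E sin(2πx) cos(πy) / D. Then D > 0 everywhere on ℝ² × (0,∞), and (u_x, u_y) satisfies the two-dimensional coupled Burgers' equations on ℝ² × (0,∞): ∂u_x/∂t + u_x ∂u_x/∂x + u_y ∂u_x/∂y = ν (∂²u_x/∂x² + ∂²u_x/∂y²) and ∂u_y/∂t + u_x ∂u_y/∂x + u_y ∂u_y/∂y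 = ν (∂²u_y/∂x² + ∂²u_y/∂y²). -/
/-!
Cole–Hopf: for `κ = -ν (a² + b²)` the heat mode `θ = c + e^{κt} sin(ax) sin(by)` solves
`θ_t = ν Δθ`, and wherever `θ ≠ 0` the field `u = -2ν ∇θ / θ` then solves the coupled
Burgers' equations. Its `y`-component is its `x`-component with `(a, x)` and `(b, y)`
exchanged, so the second equation is the first one for the exchanged mode. The theorem is
the case `c = 2`, `a = 2π`, `b = π`, `κ = -5νπ²`, where `|e^{κt} sin sin| ≤ 1 < 2` for
`t > 0`.
-/

open Real Topology

theorem deriv_deriv_div {𝕜 : Type*} [NontriviallyNormedField 𝕜] {f f' g g' : 𝕜 → 𝕜}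
    {f'' g'' z : 𝕜}
    (hf : ∀ᶠ w in 𝓝 z, HasDerivAt f (f' w) w) (hf' : HasDerivAt f' f'' z)
    (hg : ∀ᶠ w in 𝓝 z, HasDerivAt g (g' w) w) (hg' : HasDerivAt g' g'' z)
    (hg0 : ∀ᶠ w in 𝓝 z, g w ≠ 0) :
    deriv (deriv fun w => f w / g w) z =
      (f'' * g z - f z * g'') / g z ^ 2 - 2 * g' z * (f' z * g z - f z * g' z) / g z ^ 3 := by
  have hderiv : deriv (fun w => f w / g w) =ᶠ[𝓝 z]
      fun w => (f' w * g w - f w * g' w) / g w ^ 2 := by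
    filter_upwards [hf, hg, hg0] with w hfw hgw hw
    exact (hfw.div hgw hw).deriv
  have hgz := hg0.self_of_nhds
  have h := ((hf'.mul hg.self_of_nhds).sub (hf.self_of_nhds.mul hg')).div
    (hg.self_of_nhds.pow 2) (pow_ne_zero 2 hgz)
  rw [(h.congr_of_eventuallyEq hderiv).deriv]
  simp only [Pi.mul_apply, Pi.sub_apply, Pi.pow_apply, Nat.cast_ofNat]
  field_simp
  ring

noncomputable def heatMode (κ a b c x y t : ℝ) : ℝ :=
  c + exp (κ * t) * sin (a * x) * sin (b * y)

/-- The `x`-component of `-2ν ∇θ / θ` for `θ = heatMode κ a b c`; the `y`-component at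
`(x, y, t)` is `coleHopfVelocity ν κ b a c y x t`. -/
noncomputable def coleHopfVelocity (ν κ a b c x y t : ℝ) : ℝ :=
  -2 * ν * (a * exp (κ * t) * cos (a * x) * sin (b * y)) / heatMode κ a b c x y t

theorem heatMode_comm (κ a b c x y t : ℝ) :
    heatMode κ b a c y x t = heatMode κ a b c x y t := by
  simp only [heatMode, mul_right_comm]

theorem heatMode_pos {κ a b c x y t : ℝ} (hκt : κ * t ≤ 0) (hc : 1 < c) :
    0 < heatMode κ a b c x y t := by
  have hE : exp (κ * t) ≤ 1 := exp_le_one_iff.mpr hκt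
  have hmode : |exp (κ * t) * sin (a * x) * sin (b * y)| ≤ 1 := by
    rw [abs_mul, abs_mul, abs_of_pos (exp_pos _)]
    calc exp (κ * t) * |sin (a * x)| * |sin (b * y)| ≤ 1 * 1 * 1 := by
          gcongr
          exacts [abs_sin_le_one _, abs_sin_le_one _]
      _ = 1 := by ring
  unfold heatMode
  linarith [neg_abs_le (exp (κ * t) * sin (a * x) * sin (b * y))]

theorem coleHopfVelocity_burgers {ν κ a b c x y t : ℝ} (hκ : κ = -ν * (a ^ 2 + b ^ 2))
    (hθ : ∀ x y, heatMode κ a b c x y t ≠ 0) :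
    deriv (fun τ => coleHopfVelocity ν κ a b c x y τ) t
        + coleHopfVelocity ν κ a b c x y t
          * deriv (fun x' => coleHopfVelocity ν κ a b c x' y t) x
        + coleHopfVelocity ν κ b a c y x t
          * deriv (fun y' => coleHopfVelocity ν κ a b c x y' t) y
      = ν * (deriv (deriv fun x' => coleHopfVelocity ν κ a b c x' y t) x
          + deriv (deriv fun y' => coleHopfVelocity ν κ a b c x y' t) y) := by
  have hsin (k z : ℝ) : HasDerivAt (fun z => sin (k * z)) (cos (k * z) * k) z :=
    (hasDerivAt_const_mul k).sin
  have hcos (k z : ℝ) : HasDerivAt (fun z => cos (k * z)) (-sin (k * z) * k) z :=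
    (hasDerivAt_const_mul k).cos
  have hexp : HasDerivAt (fun τ => exp (κ * τ)) (exp (κ * t) * κ) t :=
    (hasDerivAt_const_mul κ).exp
  set E := exp (κ * t)
  set S := sin (a * x)
  set s := sin (b * y)
  have hθt : HasDerivAt (fun τ => heatMode κ a b c x y τ) _ t :=
    ((hexp.mul_const S).mul_const s).const_add c
  have hθx (w : ℝ) : HasDerivAt (fun w => heatMode κ a b c w y t) _ w :=
    (((hsin a w).const_mul E).mul_const s).const_add c
  have hθxx := (((hcos a x).mul_const a).const_mul E).mul_const s
  have hθy (w : ℝ) : HasDerivAt (fun w => heatMode κ a b c x w t) _ w :=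
    ((hsin b w).const_mul (E * S)).const_add c
  have hθyy := ((hcos b y).mul_const b).const_mul (E * S)
  have hNt := (((hexp.const_mul a).mul_const (cos (a * x))).mul_const s).const_mul (-2 * ν)
  have hNx (w : ℝ) := (((hcos a w).const_mul (a * E)).mul_const s).const_mul (-2 * ν)
  have hNxx := ((((hsin a x).neg.mul_const a).const_mul (a * E)).mul_const s).const_mul (-2 * ν)
  have hNy (w : ℝ) := ((hsin b w).const_mul (a * E * cos (a * x))).const_mul (-2 * ν)
  have hNyy := (((hcos b y).mul_const b).const_mul (a * E * cos (a * x))).const_mul (-2 * ν)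
  have hut : HasDerivAt (fun τ => coleHopfVelocity ν κ a b c x y τ) _ t :=
    hNt.div hθt (hθ x y)
  have hux : HasDerivAt (fun w => coleHopfVelocity ν κ a b c w y t) _ x :=
    (hNx x).div (hθx x) (hθ x y)
  have huy : HasDerivAt (fun w => coleHopfVelocity ν κ a b c x w t) _ y :=
    (hNy y).div (hθy y) (hθ x y)
  have huxx : deriv (deriv fun w => coleHopfVelocity ν κ a b c w y t) x = _ :=
    deriv_deriv_div (.of_forall hNx) hNxx (.of_forall hθx) hθxx (.of_forall (hθ · y))
  have huyy : deriv (deriv fun w => coleHopfVelocity ν κ a b c x w t) y = _ :=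
    deriv_deriv_div (.of_forall hNy) hNyy (.of_forall hθy) hθyy (.of_forall (hθ x))
  rw [hut.deriv, hux.deriv, huy.deriv, huxx, huyy]
  simp only [coleHopfVelocity, heatMode_comm]
  -- Only derivatives of `θ` enter the Cole–Hopf identity, so `θ x y t` stays an opaque atom.
  have hθxy := hθ x y
  field_simp
  subst hκ
  ring

/-- The Cole–Hopf velocity field
`u_x = −2ν·2π E cos(2πx) sin(πy)/D`, `u_y = −2ν·π E sin(2πx) cos(πy)/D`
with `E = exp(−5νπ²t)` and `D = 2 + E sin(2πx) sin(πy)` has positive denominator `D`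
and solves the two-dimensional coupled Burgers' equations for `t > 0`. -/
theorem burgers_2d_analytical_solution
    (ν : ℝ) (hν : 0 < ν)
    (ux uy : ℝ → ℝ → ℝ → ℝ)
    (hux : ∀ x y t : ℝ, ux x y t =
      -2 * ν * (2 * π * Real.exp (-5 * ν * π ^ 2 * t) * Real.cos (2 * π * x) * Real.sin (π * y)) /
        (2 + Real.exp (-5 * ν * π ^ 2 * t) * Real.sin (2 * π * x) * Real.sin (π * y)))
    (huy : ∀ x y t : ℝ, uy x y t =
      -2 * ν * (π * Real.exp (-5 * ν * π ^ 2 * t) * Real.sin (2 * π * x) * Real.cos (π * y)) /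
        (2 + Real.exp (-5 * ν * π ^ 2 * t) * Real.sin (2 * π * x) * Real.sin (π * y))) :
    ∀ x y t : ℝ, 0 < t →
      (0 < 2 + Real.exp (-5 * ν * π ^ 2 * t) * Real.sin (2 * π * x) * Real.sin (π * y)) ∧
      (deriv (fun τ => ux x y τ) t
          + ux x y t * deriv (fun a => ux a y t) x
          + uy x y t * deriv (fun b => ux x b t) y
        = ν * (deriv (deriv (fun a => ux a y t)) x + deriv (deriv (fun b => ux x b t)) y)) ∧
      (deriv (fun τ => uy x y τ) t
          + ux x y t * deriv (fun a => uy a y t) x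
          + uy x y t * deriv (fun b => uy x b t) y
        = ν * (deriv (deriv (fun a => uy a y t)) x + deriv (deriv (fun b => uy x b t)) y)) := by
  intro x y t ht
  have hκ : -5 * ν * π ^ 2 = -ν * ((2 * π) ^ 2 + π ^ 2) := by ring
  have hθ (x y : ℝ) : 0 < heatMode (-5 * ν * π ^ 2) (2 * π) π 2 x y t := by
    refine heatMode_pos ?_ one_lt_two
    have : 0 ≤ 5 * ν * π ^ 2 * t := by positivity
    linarith
  obtain rfl : ux = coleHopfVelocity ν (-5 * ν * π ^ 2) (2 * π) π 2 := funext₃ hux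
  obtain rfl : uy = fun x y t => coleHopfVelocity ν (-5 * ν * π ^ 2) π (2 * π) 2 y x t := by
    funext x y t
    rw [huy, coleHopfVelocity, heatMode]
    ring
  refine ⟨hθ x y, coleHopfVelocity_burgers hκ fun x y => (hθ x y).ne', ?_⟩
  have hexchanged := coleHopfVelocity_burgers (x := y) (y := x) (hκ.trans (by ring))
    fun x y => heatMode_comm .. ▸ (hθ y x).ne'
  linarith
end
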